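/- For all real α, β with α ≥ 1/4 + β/8, the Hilbert–Schmidt distance between ρ_{α,β,0} and the state σ̃_β := ρ_{1/4+β/8, β, 0} equals ‖σ̃_β − ρ_{α,β,0}‖ = (2√2/3)·(α − 1/4 − β/8). -/
import Mathlib


open Matrix Complex
open scoped Matrix Kronecker ComplexOrder

noncomputable section

/-- A density matrix: Hermitian, positive semidefinite, trace 1. -/
def IsDensityMatrix {n : Type*} [Fintype n] [DecidableEq n] (ρ : Matrix n n ℂ) : Prop :=
  ρ.IsHermitian ∧ ρ.PosSemidef ∧ ρ.trace = 1

/-- A separable state on ℂ^d ⊗ ℂ^d : a finite convex combination of Kronecker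
products of density matrices. -/
def IsSepState {d : ℕ} (ρ : Matrix (Fin d × Fin d) (Fin d × Fin d) ℂ) : Prop :=
  ∃ (K : ℕ) (p : Fin K → ℝ) (ρ₁ ρ₂ : Fin K → Matrix (Fin d) (Fin d) ℂ),
    (∀ k, 0 ≤ p k) ∧ (∑ k, p k = 1) ∧
    (∀ k, IsDensityMatrix (ρ₁ k)) ∧ (∀ k, IsDensityMatrix (ρ₂ k)) ∧
    ρ = ∑ k, (p k : ℂ) • (ρ₁ k ⊗ₖ ρ₂ k)

/-- Hilbert–Schmidt inner product ⟨A,B⟩ = Tr(A†B). -/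
def hsInner {n : Type*} [Fintype n] (A B : Matrix n n ℂ) : ℂ := (Aᴴ * B).trace

/-- Hilbert–Schmidt (Frobenius) norm ‖A‖ = √Tr(A†A). -/
def hsNorm {n : Type*} [Fintype n] (A : Matrix n n ℂ) : ℝ :=
  Real.sqrt ((Aᴴ * A).trace.re)

/-- The Weyl operator U_{nm} on ℂ^d: (U_{nm})_{k,l} = exp(2πi k n / d) if l = (k+m) mod d. -/
def weyl (d : ℕ) (n m : Fin d) : Matrix (Fin d) (Fin d) ℂ :=
  Matrix.of fun k l =>
    if l = k + m then Complex.exp (2 * Real.pi * Complex.I * k.val * n.val / d) else 0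

/-- The maximally entangled two-qutrit vector |φ⁺₃⟩. -/
def phiPlus3 : (Fin 3 × Fin 3) → ℂ :=
  fun p => if p.1 = p.2 then ((1 / Real.sqrt 3 : ℝ) : ℂ) else 0

/-- The projector |φ⁺₃⟩⟨φ⁺₃|. -/
def projPhiPlus3 : Matrix (Fin 3 × Fin 3) (Fin 3 × Fin 3) ℂ :=
  vecMulVec phiPlus3 (star phiPlus3)

/-- The two-qutrit Bell projectors P_{nm}. -/
def bellP (n m : Fin 3) : Matrix (Fin 3 × Fin 3) (Fin 3 × Fin 3) ℂ :=
  (weyl 3 n m ⊗ₖ (1 : Matrix (Fin 3) (Fin 3) ℂ)) * projPhiPlus3 *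
    (weyl 3 n m ⊗ₖ (1 : Matrix (Fin 3) (Fin 3) ℂ))ᴴ

/-- The three-parameter family of two-qutrit states ρ_{α,β,γ}. -/
def rhoFam (α β γ : ℝ) : Matrix (Fin 3 × Fin 3) (Fin 3 × Fin 3) ℂ :=
  (((1 - α - β - γ) / 9 : ℝ) : ℂ) • (1 : Matrix (Fin 3 × Fin 3) (Fin 3 × Fin 3) ℂ) +
    (α : ℂ) • bellP 0 0 + ((β / 2 : ℝ) : ℂ) • (bellP 1 0 + bellP 2 0) +
    ((γ / 3 : ℝ) : ℂ) • (bellP 0 1 + bellP 1 1 + bellP 2 1)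

/-- The operator U₁. -/
def opU1 : Matrix (Fin 3 × Fin 3) (Fin 3 × Fin 3) ℂ :=
  weyl 3 0 1 ⊗ₖ weyl 3 0 1 + weyl 3 0 2 ⊗ₖ weyl 3 0 2 + weyl 3 1 1 ⊗ₖ weyl 3 2 1 +
    weyl 3 1 2 ⊗ₖ weyl 3 2 2 + weyl 3 2 1 ⊗ₖ weyl 3 1 1 + weyl 3 2 2 ⊗ₖ weyl 3 1 2

/-- The operator U₂ᴵ. -/
def opU2I : Matrix (Fin 3 × Fin 3) (Fin 3 × Fin 3) ℂ := weyl 3 1 0 ⊗ₖ weyl 3 2 0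

/-- The operator U₂ᴵᴵ. -/
def opU2II : Matrix (Fin 3 × Fin 3) (Fin 3 × Fin 3) ℂ := weyl 3 2 0 ⊗ₖ weyl 3 1 0

/-- The operator U₂ = U₂ᴵ + U₂ᴵᴵ. -/
def opU2 : Matrix (Fin 3 × Fin 3) (Fin 3 × Fin 3) ℂ := opU2I + opU2II

/-- σ₊ = (1/3)(|01⟩⟨01| + |12⟩⟨12| + |20⟩⟨20|). -/
def sigmaPlus : Matrix (Fin 3 × Fin 3) (Fin 3 × Fin 3) ℂ :=
  (1 / 3 : ℂ) • Matrix.diagonal (fun p => if p.2 = p.1 + 1 then 1 else 0)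

/-- σ₋ = (1/3)(|10⟩⟨10| + |21⟩⟨21| + |02⟩⟨02|). -/
def sigmaMinus : Matrix (Fin 3 × Fin 3) (Fin 3 × Fin 3) ℂ :=
  (1 / 3 : ℂ) • Matrix.diagonal (fun p => if p.1 = p.2 + 1 then 1 else 0)

/-- The Horodecki states ρ_b. -/
def horodecki (b : ℝ) : Matrix (Fin 3 × Fin 3) (Fin 3 × Fin 3) ℂ :=
  (2 / 7 : ℂ) • projPhiPlus3 + ((b / 7 : ℝ) : ℂ) • sigmaPlus +
    (((5 - b) / 7 : ℝ) : ℂ) • sigmaMinus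

/-- Partial transpose in the second subsystem. -/
def ptB (ρ : Matrix (Fin 3 × Fin 3) (Fin 3 × Fin 3) ℂ) :
    Matrix (Fin 3 × Fin 3) (Fin 3 × Fin 3) ℂ :=
  Matrix.of fun p q => ρ (p.1, q.2) (q.1, p.2)

lemma proj_apply (p q : Fin 3 × Fin 3) :
    projPhiPlus3 p q = if p.1 = p.2 ∧ q.1 = q.2 then (1/3 : ℂ) else 0 := by
  simp only [projPhiPlus3, vecMulVec, phiPlus3, Matrix.of_apply, Pi.star_apply]
  by_cases h1 : p.1 = p.2 <;> by_cases h2 : q.1 = q.2 <;>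
    simp [h1, h2, ← Complex.ofReal_mul]
  rw [← mul_inv, ← Complex.ofReal_mul, Real.mul_self_sqrt (by norm_num)]
  norm_num

lemma weyl00 : weyl 3 0 0 = 1 := by
  ext k l
  simp [weyl, Matrix.one_apply, eq_comm]

lemma bell00 : bellP 0 0 = projPhiPlus3 := by
  simp [bellP, weyl00, Matrix.kroneckerMap_one_one]

lemma proj_sq : projPhiPlus3 * projPhiPlus3 = projPhiPlus3 := by
  ext p q
  simp only [Matrix.mul_apply, proj_apply, Fintype.sum_prod_type, Fin.sum_univ_succ,
    Fin.sum_univ_zero]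
  by_cases h1 : p.1 = p.2 <;> by_cases h2 : q.1 = q.2 <;> simp [h1, h2] <;>
    norm_num [Fin.ext_iff]

lemma proj_trace : projPhiPlus3.trace = 1 := by
  simp only [Matrix.trace, Matrix.diag_apply, proj_apply, Fintype.sum_prod_type,
    Fin.sum_univ_succ, Fin.sum_univ_zero]
  norm_num [Fin.ext_iff]

lemma proj_herm : projPhiPlus3ᴴ = projPhiPlus3 := by
  ext p q
  simp only [Matrix.conjTranspose_apply, proj_apply]
  by_cases h1 : p.1 = p.2 <;> by_cases h2 : q.1 = q.2 <;> simp [h1, h2]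

/-- Hilbert–Schmidt distance to the nearest separable state in region I. -/
theorem stmt9 (α β : ℝ) (h : 1 / 4 + β / 8 ≤ α) :
    hsNorm (rhoFam (1 / 4 + β / 8) β 0 - rhoFam α β 0)
      = 2 * Real.sqrt 2 / 3 * (α - 1 / 4 - β / 8) := by
  set t : ℝ := α - 1 / 4 - β / 8 with ht
  have ht0 : 0 ≤ t := by simp [ht]; linarith
  set M : Matrix (Fin 3 × Fin 3) (Fin 3 × Fin 3) ℂ :=
    ((1/9 : ℝ) : ℂ) • (1 : Matrix (Fin 3 × Fin 3) (Fin 3 × Fin 3) ℂ) - projPhiPlus3 with hM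
  have hD : rhoFam (1 / 4 + β / 8) β 0 - rhoFam α β 0 = (t : ℂ) • M := by
    simp only [rhoFam, bell00, hM, ht]
    push_cast
    module
  have hMH : Mᴴ = M := by
    simp [hM, proj_herm, Matrix.conjTranspose_smul, Complex.star_def, Complex.conj_ofReal]
  have htr : (Mᴴ * M).trace = ((8/9 : ℝ) : ℂ) := by
    rw [hMH, hM]
    simp only [Matrix.mul_sub, Matrix.sub_mul, Matrix.smul_mul, Matrix.mul_smul,
      Matrix.mul_one, Matrix.one_mul, proj_sq, Matrix.trace_sub, Matrix.trace_smul,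
      proj_trace, Matrix.trace_one]
    norm_num [Fintype.card_prod]
  rw [hD]
  unfold hsNorm
  rw [Matrix.conjTranspose_smul, Complex.star_def, Complex.conj_ofReal,
    Matrix.smul_mul, Matrix.mul_smul, smul_smul, Matrix.trace_smul, htr]
  rw [smul_eq_mul, ← Complex.ofReal_mul, ← Complex.ofReal_mul, Complex.ofReal_re]
  have hsq : (2 * Real.sqrt 2 / 3 * t)^2 = t * t * (8/9) := by
    have h2 : Real.sqrt 2 ^ 2 = 2 := Real.sq_sqrt (by norm_num)
    have : (2 * Real.sqrt 2 / 3 * t)^2 = Real.sqrt 2 ^ 2 * (4 * t^2 / 9) := by ring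
    rw [this, h2]; ring
  rw [← hsq, Real.sqrt_sq (by positivity)]

end
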